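/- arXiv:2411.15561 — 5 statements merged into one kernel-verified Lean document; each statement's English description precedes it below -/
import Mathlib

section
/- For the power-law breakage kernel β_ν with ν ∈ (-1,0], for every m > 1 and all x,y > 0, ∫₀^{x+y} z^m β_ν(z,x,y) dz = ((ν+2)/(m+ν+1)) (x+y)^m ≤ (1 - κ_m)(x^m + y^m) + ς_m (x y^{m-1} + y x^{m-1}), where κ_m = (m-1)/(m+ν+1) and ς_m = C_m(ν+2)/(m+ν+1), with C_m = 2^{m-1} - 1 for m ∈ (1,2] ∪ [3,∞) and C_m = m for m ∈ (2,3). -/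
open Real MeasureTheory Set

/-- The constant `C_m`: `2^(m-1) - 1` for `m ∈ (1,2] ∪ [3,∞)` and `m` for `m ∈ (2,3)`. -/
noncomputable def Cm (m : ℝ) : ℝ := if m ≤ 2 ∨ 3 ≤ m then 2 ^ (m - 1) - 1 else m

/-!
The moment identity is a direct integration, and since `1 - κ_m = (ν + 2)/(m + ν + 1) ≥ 0` the
inequality is that coefficient times `(x + y)^m ≤ x^m + y^m + C_m (x y^(m-1) + y x^(m-1))`.
By homogeneity and symmetry this reduces to `(1 + t)^m ≤ 1 + t^m + C (t + t^(m-1))` on `[0, 1]`.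

For `m ∈ [2, 3]` this follows from Bernoulli's inequality `(1 + t)^(m-2) ≤ 1 + (m - 2) t`.
Otherwise take `C = 2^(m-1) - 1`, so that the defect `G(t) = 1 + t^m + C (t + t^(m-1)) - (1 + t)^m`
vanishes at `t = 0` and `t = 1`, and `G'(1) = 0`. One computes
`G''(t) = (m - 1) t^(m-3) (C (m - 2) - m σ(1 + 1/t))`, where `σ` is the secant slope of
`x ↦ x^(m-2)` at `1`. That power is convex exactly when `m ∉ (2, 3)`, so `σ` is monotone and
`G''` changes sign at most once, from `-` to `+`. Together with `G'(1) = 0`, `G'` can only change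
sign from `+` to `-` on `(0, 1]`, so `G ≥ min (G 0) (G 1) = 0`.
-/

theorem le_max_of_hasDerivAt_of_pos_imp_nonneg {f f' : ℝ → ℝ} {a b c : ℝ} (hab : a ≤ b)
    (hbc : b ≤ c) (hf : ContinuousOn f (Icc a c)) (hf' : ∀ x ∈ Ioo a c, HasDerivAt f (f' x) x)
    (hsign : ∀ x ∈ Ioo a c, ∀ y ∈ Ioo a c, x < y → 0 < f' x → 0 ≤ f' y) :
    f b ≤ max (f a) (f c) := by
  by_cases hdec : ∀ x ∈ Ioo a b, f' x ≤ 0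
  · refine le_max_of_le_left ?_
    refine antitoneOn_of_hasDerivWithinAt_nonpos (f' := f') (convex_Icc a b)
      (hf.mono (Icc_subset_Icc_right hbc)) (fun x hx ↦ ?_) (fun x hx ↦ ?_)
      (left_mem_Icc.2 hab) (right_mem_Icc.2 hab) hab
    · rw [interior_Icc] at hx ⊢
      exact (hf' x ⟨hx.1, hx.2.trans_le hbc⟩).hasDerivWithinAt
    · exact hdec x (by rwa [interior_Icc] at hx)
  · push Not at hdec
    obtain ⟨x, hx, hfx⟩ := hdec
    refine le_max_of_le_right ?_
    refine monotoneOn_of_hasDerivWithinAt_nonneg (f' := f') (convex_Icc b c)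
      (hf.mono (Icc_subset_Icc_left hab)) (fun y hy ↦ ?_) (fun y hy ↦ ?_)
      (left_mem_Icc.2 hbc) (right_mem_Icc.2 hbc) hbc
    · rw [interior_Icc] at hy ⊢
      exact (hf' y ⟨hab.trans_lt hy.1, hy.2⟩).hasDerivWithinAt
    · rw [interior_Icc] at hy
      exact hsign x ⟨hx.1, hx.2.trans_le hbc⟩ y ⟨hab.trans_lt hy.1, hy.2⟩ (hx.2.trans hy.1)
        hfx

theorem convexOn_rpow_Ioi {p : ℝ} (hp : p ≤ 0 ∨ 1 ≤ p) :
    ConvexOn ℝ (Ioi 0) fun x : ℝ ↦ x ^ p := by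
  refine convexOn_of_hasDerivWithinAt2_nonneg (convex_Ioi 0) (f' := fun x ↦ p * x ^ (p - 1))
    (f'' := fun x ↦ p * ((p - 1) * x ^ (p - 1 - 1)))
    (fun x hx ↦ (continuousAt_rpow_const x p (Or.inl hx.ne')).continuousWithinAt)
    (fun x hx ↦ ?_) (fun x hx ↦ ?_) (fun x hx ↦ ?_) <;> rw [interior_Ioi] at hx
  · exact (hasDerivAt_rpow_const (Or.inl hx.ne')).hasDerivWithinAt
  · exact ((hasDerivAt_rpow_const (Or.inl hx.ne')).const_mul p).hasDerivWithinAt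
  · have : 0 ≤ p * (p - 1) := by rcases hp with hp | hp <;> nlinarith
    have := rpow_pos_of_pos (mem_Ioi.1 hx) (p - 1 - 1)
    nlinarith

theorem monotoneOn_rpow_secant_one {p : ℝ} (hp : p ≤ 0 ∨ 1 ≤ p) :
    MonotoneOn (fun x : ℝ ↦ (x ^ p - 1) / (x - 1)) (Ioi 1) := by
  intro x hx y hy hxy
  have := (convexOn_rpow_Ioi hp).secant_mono (a := 1) (mem_Ioi.2 one_pos)
    (mem_Ioi.2 (zero_lt_one.trans hx)) (mem_Ioi.2 (zero_lt_one.trans hy)) (ne_of_gt hx)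
    (ne_of_gt hy) hxy
  simpa only [one_rpow] using this

noncomputable def binomialDefect (m C t : ℝ) : ℝ :=
  1 + t ^ m + C * (t + t ^ (m - 1)) - (1 + t) ^ m

noncomputable def binomialDefectDeriv (m C t : ℝ) : ℝ :=
  m * t ^ (m - 1) + C * (1 + (m - 1) * t ^ (m - 2)) - m * (1 + t) ^ (m - 1)

section BinomialDefect

variable {m : ℝ}

theorem hasDerivAt_binomialDefect (C : ℝ) {t : ℝ} (ht : 0 < t) :
    HasDerivAt (binomialDefect m C) (binomialDefectDeriv m C t) t := by
  have h1 : HasDerivAt (fun s : ℝ ↦ 1 + s) 1 t := (hasDerivAt_id t).const_add 1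
  have := (((hasDerivAt_rpow_const (p := m) (Or.inl ht.ne')).const_add 1).add
    (((hasDerivAt_id t).add (hasDerivAt_rpow_const (p := m - 1) (Or.inl ht.ne'))).const_mul C)).sub
    (h1.rpow_const (p := m) (Or.inl (by positivity)))
  refine this.congr_deriv ?_
  simp only [binomialDefectDeriv, show m - 1 - 1 = m - 2 by ring]
  ring

theorem hasDerivAt_binomialDefectDeriv (C : ℝ) {t : ℝ} (ht : 0 < t) :
    HasDerivAt (binomialDefectDeriv m C)
      ((m - 1) * t ^ (m - 3) *
        (C * (m - 2) - m * (((1 + t⁻¹) ^ (m - 2) - 1) / (1 + t⁻¹ - 1)))) t := by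
  have h1 : HasDerivAt (fun s : ℝ ↦ 1 + s) 1 t := (hasDerivAt_id t).const_add 1
  have := (((hasDerivAt_rpow_const (p := m - 1) (Or.inl ht.ne')).const_mul m).add
    (((hasDerivAt_rpow_const (p := m - 2) (Or.inl ht.ne')).const_mul (m - 1)).const_add 1
      |>.const_mul C)).sub
    ((h1.rpow_const (p := m - 1) (Or.inl (by positivity))).const_mul m)
  refine this.congr_deriv ?_
  have hpow : t ^ (m - 3) * t = t ^ (m - 2) := by
    rw [← rpow_add_one ht.ne']; ring_nf
  have hshift : t ^ (m - 2) * (1 + t⁻¹) ^ (m - 2) = (1 + t) ^ (m - 2) := by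
    rw [← mul_rpow ht.le (by positivity)]; congr 1; field_simp; ring
  rw [add_sub_cancel_left, div_inv_eq_mul]
  simp only [show m - 2 - 1 = m - 3 by ring, show m - 1 - 1 = m - 2 by ring]
  linear_combination (m * (m - 1)) * ((1 + t⁻¹) ^ (m - 2) - 1) * hpow + m * (m - 1) * hshift

theorem continuous_binomialDefect (C : ℝ) (hm : 1 ≤ m) : Continuous (binomialDefect m C) := by
  have := continuous_rpow_const (show 0 ≤ m by linarith)
  have := continuous_rpow_const (show 0 ≤ m - 1 by linarith)
  unfold binomialDefect
  fun_prop

theorem binomialDefect_zero (C : ℝ) (hm : 1 < m) : binomialDefect m C 0 = 0 := by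
  simp [binomialDefect, zero_rpow (by linarith : m ≠ 0), zero_rpow (by linarith : m - 1 ≠ 0)]

theorem binomialDefect_one : binomialDefect m (2 ^ (m - 1) - 1) 1 = 0 := by
  have h := rpow_add two_pos 1 (m - 1)
  rw [add_sub_cancel, rpow_one] at h
  simp only [binomialDefect, one_rpow, one_add_one_eq_two, h]
  ring

theorem binomialDefectDeriv_one : binomialDefectDeriv m (2 ^ (m - 1) - 1) 1 = 0 := by
  simp only [binomialDefectDeriv, one_rpow, one_add_one_eq_two]
  ring

theorem binomialDefectDeriv_nonpos_of_neg (hm : 1 < m) (hcase : m ≤ 2 ∨ 3 ≤ m) {s u : ℝ}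
    (hs : 0 < s) (hsu : s ≤ u) (hu : u ≤ 1)
    (hneg : binomialDefectDeriv m (2 ^ (m - 1) - 1) s < 0) :
    binomialDefectDeriv m (2 ^ (m - 1) - 1) u ≤ 0 := by
  set C : ℝ := 2 ^ (m - 1) - 1
  have hderiv : ∀ x ∈ Ioo s 1, HasDerivAt (binomialDefectDeriv m C) _ x :=
    fun x hx ↦ hasDerivAt_binomialDefectDeriv C (hs.trans hx.1)
  have hmax := le_max_of_hasDerivAt_of_pos_imp_nonneg hsu hu
    (fun x hx ↦
      (hasDerivAt_binomialDefectDeriv C (hs.trans_le hx.1)).continuousAt.continuousWithinAt)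
    hderiv ?_
  · rw [binomialDefectDeriv_one] at hmax
    exact hmax.trans (max_le hneg.le le_rfl)
  intro x hx y hy hxy hpos
  have hx₀ : 0 < x := hs.trans hx.1
  have hy₀ : 0 < y := hx₀.trans hxy
  have hsecant := monotoneOn_rpow_secant_one (p := m - 2)
    (by rcases hcase with h | h <;> [left; right] <;> linarith)
    (show 1 + y⁻¹ ∈ Ioi 1 by simp [hy₀]) (show 1 + x⁻¹ ∈ Ioi 1 by simp [hx₀])
    (by gcongr)
  have hfactor : 0 < (m - 1) * x ^ (m - 3) := mul_pos (by linarith) (rpow_pos_of_pos hx₀ _)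
  have hx_pos := (pos_iff_pos_of_mul_pos hpos).1 hfactor
  refine mul_nonneg (mul_nonneg (by linarith) (rpow_pos_of_pos hy₀ _).le) ?_
  have := mul_le_mul_of_nonneg_left hsecant (by linarith : (0 : ℝ) ≤ m)
  linarith

theorem binomialDefect_nonneg (hm : 1 < m) (hcase : m ≤ 2 ∨ 3 ≤ m) {t : ℝ} (ht₀ : 0 ≤ t)
    (ht₁ : t ≤ 1) : 0 ≤ binomialDefect m (2 ^ (m - 1) - 1) t := by
  have hmax := le_max_of_hasDerivAt_of_pos_imp_nonneg
    (f := fun s ↦ -binomialDefect m (2 ^ (m - 1) - 1) s) ht₀ ht₁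
    (continuous_binomialDefect _ hm.le).neg.continuousOn
    (fun x hx ↦ (hasDerivAt_binomialDefect _ hx.1).neg)
    (fun x hx y hy hxy hpos ↦ neg_nonneg.2
      (binomialDefectDeriv_nonpos_of_neg hm hcase hx.1 hxy.le hy.2.le (neg_pos.1 hpos)))
  simp only [binomialDefect_zero _ hm, binomialDefect_one, neg_zero, max_self] at hmax
  linarith

end BinomialDefect

theorem one_add_rpow_le_of_two_le_of_le_three {m : ℝ} (hm₂ : 2 ≤ m) (hm₃ : m ≤ 3) {t : ℝ}
    (ht₀ : 0 ≤ t) (ht₁ : t ≤ 1) : (1 + t) ^ m ≤ 1 + t ^ m + m * (t + t ^ (m - 1)) := by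
  have hsplit : (1 + t) ^ m = (1 + t) ^ 2 * (1 + t) ^ (m - 2) := by
    rw [← rpow_natCast, ← rpow_add (by linarith)]; norm_num
  have hbernoulli : (1 + t) ^ (m - 2) ≤ 1 + (m - 2) * t :=
    rpow_one_add_le_one_add_mul_self (by linarith) (by linarith) (by linarith)
  have hsq : t ^ 2 ≤ t ^ (m - 1) := by
    rw [← rpow_natCast]
    exact rpow_le_rpow_of_exponent_ge' ht₀ ht₁ (by linarith) (by norm_num; linarith)
  have hcube : t ^ 3 ≤ t ^ m := by
    rw [← rpow_natCast]
    exact rpow_le_rpow_of_exponent_ge' ht₀ ht₁ (by linarith) (by norm_num; linarith)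
  calc (1 + t) ^ m ≤ (1 + t) ^ 2 * (1 + (m - 2) * t) := by
        rw [hsplit]; exact mul_le_mul_of_nonneg_left hbernoulli (by positivity)
    _ = 1 + m * t + (2 * m - 3) * t ^ 2 + (m - 2) * t ^ 3 := by ring
    _ ≤ 1 + t ^ m + m * (t + t ^ (m - 1)) := by
        nlinarith [pow_nonneg ht₀ 2, pow_nonneg ht₀ 3]

theorem one_add_rpow_le_Cm {m : ℝ} (hm : 1 < m) {t : ℝ} (ht₀ : 0 ≤ t) (ht₁ : t ≤ 1) :
    (1 + t) ^ m ≤ 1 + t ^ m + Cm m * (t + t ^ (m - 1)) := by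
  unfold Cm
  split_ifs with hcase
  · exact sub_nonneg.1 (binomialDefect_nonneg hm hcase ht₀ ht₁)
  · push Not at hcase
    exact one_add_rpow_le_of_two_le_of_le_three hcase.1.le hcase.2.le ht₀ ht₁

theorem add_rpow_le_Cm {m x y : ℝ} (hm : 1 < m) (hx : 0 < x) (hy : 0 < y) :
    (x + y) ^ m ≤ x ^ m + y ^ m + Cm m * (x * y ^ (m - 1) + y * x ^ (m - 1)) := by
  wlog hyx : y ≤ x generalizing x y
  · have := this hy hx (le_of_not_ge hyx)
    rw [add_comm y] at this
    linarith
  have hxm : x ^ m = x * x ^ (m - 1) := by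
    rw [← rpow_one_add' hx.le (by linarith), add_sub_cancel]
  have hscale : ∀ s : ℝ, 0 ≤ s → x ^ m * (s / x) ^ m = s ^ m := fun s hs ↦ by
    rw [← mul_rpow hx.le (by positivity), mul_div_cancel₀ _ hx.ne']
  have hlin : x ^ m * (y / x) = y * x ^ (m - 1) := by
    rw [hxm]; field_simp
  have hsub : x ^ m * (y / x) ^ (m - 1) = x * y ^ (m - 1) := by
    rw [div_rpow hy.le hx.le, hxm]; field_simp
  calc (x + y) ^ m = x ^ m * (1 + y / x) ^ m := by
        rw [← hscale (x + y) (by positivity), add_div, div_self hx.ne']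
    _ ≤ x ^ m * (1 + (y / x) ^ m + Cm m * (y / x + (y / x) ^ (m - 1))) :=
        mul_le_mul_of_nonneg_left (one_add_rpow_le_Cm hm (by positivity) ((div_le_one hx).2 hyx))
          (by positivity)
    _ = x ^ m + y ^ m + Cm m * (x * y ^ (m - 1) + y * x ^ (m - 1)) := by
        linear_combination hscale y hy.le + Cm m * (hsub + hlin)

theorem setIntegral_Ioo_rpow {a S : ℝ} (ha : -1 < a) (hS : 0 ≤ S) :
    ∫ z in Ioo 0 S, z ^ a = S ^ (a + 1) / (a + 1) := by
  rw [← integral_Ioc_eq_integral_Ioo, ← intervalIntegral.integral_of_le hS,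
    integral_rpow (Or.inl ha), zero_rpow (by linarith), sub_zero]

theorem setIntegral_rpow_mul_powerLawKernel {ν m S : ℝ} (hmν : -1 < m + ν) (hS : 0 < S) :
    ∫ z in Ioo (0:ℝ) S, z ^ m * ((ν + 2) * z ^ ν * S ^ (-(ν + 1)))
      = (ν + 2) / (m + ν + 1) * S ^ m := by
  have hintegrand : ∫ z in Ioo (0:ℝ) S, z ^ m * ((ν + 2) * z ^ ν * S ^ (-(ν + 1)))
      = ∫ z in Ioo (0:ℝ) S, (ν + 2) * S ^ (-(ν + 1)) * z ^ (m + ν) :=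
    setIntegral_congr_fun measurableSet_Ioo fun z hz ↦ by
      simp only [rpow_add hz.1]; ring
  have hS' : S ^ (-(ν + 1)) * S ^ (m + ν + 1) = S ^ m := by
    rw [← rpow_add hS]; ring_nf
  rw [hintegrand, integral_const_mul, setIntegral_Ioo_rpow hmν hS.le, ← hS']
  ring

theorem powerlaw_superlinear_moment_general (ν m : ℝ) (hν₁ : -1 < ν) (hm : 1 < m)
    (x y : ℝ) (hx : 0 < x) (hy : 0 < y) :
    (∫ z in Ioo (0:ℝ) (x + y), z ^ m * ((ν + 2) * z ^ ν * (x + y) ^ (-(ν + 1))))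
      = (ν + 2) / (m + ν + 1) * (x + y) ^ m
    ∧ (ν + 2) / (m + ν + 1) * (x + y) ^ m
      ≤ (1 - (m - 1) / (m + ν + 1)) * (x ^ m + y ^ m)
        + Cm m * (ν + 2) / (m + ν + 1) * (x * y ^ (m - 1) + y * x ^ (m - 1)) := by
  refine ⟨setIntegral_rpow_mul_powerLawKernel (by linarith) (by linarith), ?_⟩
  have hden : 0 < m + ν + 1 := by linarith
  have hκ : 1 - (m - 1) / (m + ν + 1) = (ν + 2) / (m + ν + 1) := by field_simp; ring
  calc (ν + 2) / (m + ν + 1) * (x + y) ^ m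
      ≤ (ν + 2) / (m + ν + 1) * (x ^ m + y ^ m + Cm m * (x * y ^ (m - 1) + y * x ^ (m - 1))) :=
        mul_le_mul_of_nonneg_left (add_rpow_le_Cm hm hx hy) (div_nonneg (by linarith) hden.le)
    _ = _ := by rw [hκ]; ring

theorem powerlaw_superlinear_moment (ν m : ℝ) (hν₁ : -1 < ν) (hν₂ : ν ≤ 0) (hm : 1 < m)
    (x y : ℝ) (hx : 0 < x) (hy : 0 < y) :
    (∫ z in Ioo (0:ℝ) (x + y), z ^ m * ((ν + 2) * z ^ ν * (x + y) ^ (-(ν + 1))))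
      = (ν + 2) / (m + ν + 1) * (x + y) ^ m
    ∧ (ν + 2) / (m + ν + 1) * (x + y) ^ m
      ≤ (1 - (m - 1) / (m + ν + 1)) * (x ^ m + y ^ m)
        + Cm m * (ν + 2) / (m + ν + 1) * (x * y ^ (m - 1) + y * x ^ (m - 1)) :=
  powerlaw_superlinear_moment_general ν m hν₁ hm x y hx hy
end

section
/- For the power-law breakage kernel β_ν with σ₁ ∈ (0,1) and ν ∈ (-1, ν_{σ₁}], where ν_{σ₁} := -(1 + σ₁ - 2^{σ₁})/(1 - 2^{σ₁-1}), one has ∫₀^{x+y} z^{σ₁} β_ν(z,x,y) dz = ((ν+2)/(σ₁+ν+1))(x+y)^{σ₁} ≥ l_{σ₁}(x^{σ₁} + y^{σ₁}) for all x,y > 0, with l_{σ₁} = 2^{σ₁-1}(ν+2)/(σ₁+ν+1) ≥ 1. -/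
open Real MeasureTheory Set

theorem powerlaw_sigma1_moment_lower_bound (σ₁ ν : ℝ) (hσ₁ : 0 < σ₁) (hσ₁' : σ₁ < 1)
    (hν₁ : -1 < ν) (hν₂ : ν ≤ -(1 + σ₁ - 2 ^ σ₁) / (1 - 2 ^ (σ₁ - 1)))
    (x y : ℝ) (hx : 0 < x) (hy : 0 < y) :
    (∫ z in Ioo (0:ℝ) (x + y), z ^ σ₁ * ((ν + 2) * z ^ ν * (x + y) ^ (-(ν + 1))))
      = (ν + 2) / (σ₁ + ν + 1) * (x + y) ^ σ₁
    ∧ 2 ^ (σ₁ - 1) * (ν + 2) / (σ₁ + ν + 1) * (x ^ σ₁ + y ^ σ₁)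
      ≤ (ν + 2) / (σ₁ + ν + 1) * (x + y) ^ σ₁
    ∧ (1:ℝ) ≤ 2 ^ (σ₁ - 1) * (ν + 2) / (σ₁ + ν + 1) := by
  have hb : 0 < x + y := by linarith
  have hs : 0 < σ₁ + ν + 1 := by linarith
  have hν2 : 0 < ν + 2 := by linarith
  have hd : (0:ℝ) < 1 - 2 ^ (σ₁ - 1) := by
    have : (2:ℝ) ^ (σ₁ - 1) < 1 :=
      Real.rpow_lt_one_of_one_lt_of_neg one_lt_two (by linarith)
    linarith
  -- key arithmetic inequality
  have hkey : σ₁ + ν + 1 ≤ 2 ^ (σ₁ - 1) * (ν + 2) := by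
    have h1 : ν * (1 - 2 ^ (σ₁ - 1)) ≤ -(1 + σ₁ - 2 ^ σ₁) :=
      (le_div_iff₀ hd).mp hν₂
    have h2 : (2:ℝ) ^ σ₁ = 2 ^ (σ₁ - 1) * 2 := by
      rw [show σ₁ = σ₁ - 1 + 1 by ring, Real.rpow_add two_pos, Real.rpow_one]
      ring_nf
    nlinarith [h1, h2]
  refine ⟨?_, ?_, ?_⟩
  · -- integral computation
    have hcong : ∀ z ∈ Ioo (0:ℝ) (x + y),
        z ^ σ₁ * ((ν + 2) * z ^ ν * (x + y) ^ (-(ν + 1)))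
          = ((ν + 2) * (x + y) ^ (-(ν + 1))) * z ^ (σ₁ + ν) := by
      intro z hz
      rw [Real.rpow_add hz.1]
      ring
    have hIoo : (∫ z in Ioo (0:ℝ) (x + y), z ^ (σ₁ + ν))
        = (x + y) ^ (σ₁ + ν + 1) / (σ₁ + ν + 1) := by
      rw [← integral_Ioc_eq_integral_Ioo]
      have h1 := intervalIntegral.integral_of_le (f := fun z : ℝ => z ^ (σ₁ + ν))
        (μ := volume) hb.le
      rw [← h1, integral_rpow (Or.inl (by linarith : (-1:ℝ) < σ₁ + ν)),
        Real.zero_rpow (by linarith : σ₁ + ν + 1 ≠ 0), sub_zero]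
    rw [setIntegral_congr_fun measurableSet_Ioo hcong, integral_const_mul, hIoo]
    have hpow : (x + y) ^ (-(ν + 1)) * (x + y) ^ (σ₁ + ν + 1) = (x + y) ^ σ₁ := by
      rw [← Real.rpow_add hb]; ring_nf
    rw [← hpow]
    ring
  · -- concavity inequality
    have hcon := (Real.strictConcaveOn_rpow hσ₁ hσ₁').concaveOn
    have h := hcon.2 (le_of_lt hx : x ∈ Ici (0:ℝ)) (le_of_lt hy : y ∈ Ici (0:ℝ))
      (by norm_num : (0:ℝ) ≤ 1/2) (by norm_num : (0:ℝ) ≤ 1/2) (by norm_num)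
    simp only [smul_eq_mul] at h
    have hhalf : ((x + y)/2) ^ σ₁ = (x + y) ^ σ₁ / (2:ℝ) ^ σ₁ :=
      Real.div_rpow hb.le (by norm_num) σ₁
    have hconc : 2 ^ (σ₁ - 1) * (x ^ σ₁ + y ^ σ₁) ≤ (x + y) ^ σ₁ := by
      have hx2 : (1:ℝ)/2 * x + 1/2 * y = (x + y)/2 := by ring
      rw [hx2, hhalf] at h
      have h2 : (2:ℝ) ^ (σ₁ - 1) = 2 ^ σ₁ / 2 := by
        rw [Real.rpow_sub two_pos, Real.rpow_one]
      have hp : (0:ℝ) < 2 ^ σ₁ := Real.rpow_pos_of_pos two_pos σ₁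
      have h' := (le_div_iff₀ hp).mp h
      rw [h2]
      nlinarith [h']
    calc 2 ^ (σ₁ - 1) * (ν + 2) / (σ₁ + ν + 1) * (x ^ σ₁ + y ^ σ₁)
        = (ν + 2) / (σ₁ + ν + 1) * (2 ^ (σ₁ - 1) * (x ^ σ₁ + y ^ σ₁)) := by ring
      _ ≤ (ν + 2) / (σ₁ + ν + 1) * (x + y) ^ σ₁ :=
          mul_le_mul_of_nonneg_left hconc (by positivity)
  · rw [mul_div_assoc, ← mul_div_assoc]
    rw [le_div_iff₀ hs, one_mul]
    exact hkey
end

section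
/- For the power-law breakage kernel β_ν with ν ∈ (-1,0], for any measurable E ⊂ (0,∞) with finite Lebesgue measure |E| and any p > 1/(ν+1), one has ∫₀^{x+y} 1_E(z) β_ν(z,x,y) dz ≤ η(|E|)(x^{-1/p} + y^{-1/p}) for all x,y > 0, where η(δ) = (ν+2)((p-1)/(p(ν+1)-1))^{(p-1)/p} δ^{1/p}. -/
open Real MeasureTheory Set
open scoped ENNReal

theorem powerlaw_uniform_integrability (ν p : ℝ) (hν₁ : -1 < ν) (hν₂ : ν ≤ 0)
    (hp : 1 / (ν + 1) < p)
    (E : Set ℝ) (hE : MeasurableSet E) (hE' : E ⊆ Ioi 0) (hEfin : volume E < ⊤)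
    (x y : ℝ) (hx : 0 < x) (hy : 0 < y) :
    (∫ z in Ioo (0:ℝ) (x + y),
        E.indicator (fun _ => (1:ℝ)) z * ((ν + 2) * z ^ ν * (x + y) ^ (-(ν + 1))))
      ≤ (ν + 2) * ((p - 1) / (p * (ν + 1) - 1)) ^ ((p - 1) / p)
          * (volume E).toReal ^ (1 / p) * (x ^ (-1 / p) + y ^ (-1 / p)) := by
  set s := x + y with hs_def
  have hs : 0 < s := by positivity
  have hν1 : 0 < ν + 1 := by linarith
  have hp1 : 1 < p := lt_of_le_of_lt (by rw [le_div_iff₀ hν1]; nlinarith) hp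
  have hp0 : 0 < p := by linarith
  have hpν : 1 < p * (ν + 1) := by
    rw [div_lt_iff₀ hν1] at hp; linarith
  set q : ℝ := p / (p - 1) with hq_def
  have hpq : p.HolderConjugate q := Real.HolderConjugate.conjExponent hp1
  have hq0 : 0 < q := hpq.symm.pos
  set r : ℝ := ν * q with hr_def
  have hr1 : r + 1 = (p * (ν + 1) - 1) / (p - 1) := by
    have hps : p - 1 ≠ 0 := by linarith
    rw [hr_def, hq_def]; field_simp; ring
  have hr1pos : 0 < r + 1 := by
    rw [hr1]; exact div_pos (by linarith) (by linarith)
  have hr : -1 < r := by linarith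
  -- constants
  have hν2 : (0:ℝ) < ν + 2 := by linarith
  set c : ℝ := (ν + 2) * s ^ (-(ν + 1)) with hc_def
  have hc : 0 < c := by positivity
  -- the functions
  set f : ℝ → ℝ≥0∞ := E.indicator (fun _ => (1:ℝ≥0∞)) with hf_def
  set g : ℝ → ℝ≥0∞ := fun z => ENNReal.ofReal (z ^ ν) with hg_def
  have hfm : Measurable f := measurable_const.indicator hE
  have hgm : Measurable g := (measurable_id.pow_const ν).ennreal_ofReal
  set μ : Measure ℝ := volume.restrict (Ioo (0:ℝ) s) with hμ_def
  have haeIoo : ∀ᵐ z ∂μ, z ∈ Ioo (0:ℝ) s := ae_restrict_mem measurableSet_Ioo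
  -- the integrand
  set F : ℝ → ℝ := fun z => E.indicator (fun _ => (1:ℝ)) z * ((ν + 2) * z ^ ν * s ^ (-(ν + 1)))
    with hF_def
  have hFm : Measurable F :=
    (measurable_const.indicator hE).mul
      (((measurable_id.pow_const ν).const_mul _).mul measurable_const)
  have hFnn : ∀ᵐ z ∂μ, 0 ≤ F z := by
    filter_upwards [haeIoo] with z hz
    have hz0 : (0:ℝ) < z := hz.1
    have : (0:ℝ) ≤ E.indicator (fun _ => (1:ℝ)) z := Set.indicator_nonneg (by intros; norm_num) z
    positivity
  -- Step A : rewrite as toReal of a lintegral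
  have stepA : (∫ z in Ioo (0:ℝ) s, F z) = (∫⁻ z, ENNReal.ofReal (F z) ∂μ).toReal := by
    exact integral_eq_lintegral_of_nonneg_ae hFnn hFm.aestronglyMeasurable
  -- Step B : the ofReal of the integrand
  have stepB : (∫⁻ z, ENNReal.ofReal (F z) ∂μ)
      = ENNReal.ofReal c * ∫⁻ z, (f * g) z ∂μ := by
    rw [← lintegral_const_mul' _ _ ENNReal.ofReal_ne_top]
    refine lintegral_congr_ae ?_
    filter_upwards [haeIoo] with z hz
    have hz0 : (0:ℝ) < z := hz.1
    have hzν : (0:ℝ) ≤ z ^ ν := rpow_nonneg hz0.le ν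
    have hind : ENNReal.ofReal (E.indicator (fun _ => (1:ℝ)) z) = f z := by
      by_cases hzE : z ∈ E <;>
        simp [hf_def, hzE]
    have : F z = ((ν + 2) * s ^ (-(ν + 1))) * (E.indicator (fun _ => (1:ℝ)) z * z ^ ν) := by
      rw [hF_def]; ring
    rw [this, ENNReal.ofReal_mul hc.le, ENNReal.ofReal_mul
      (Set.indicator_nonneg (by intros; norm_num) z), hind]
    simp only [Pi.mul_apply, hg_def, hc_def]
  -- Step C : Hölder
  have stepC : (∫⁻ z, (f * g) z ∂μ)
      ≤ (∫⁻ z, f z ^ p ∂μ) ^ (1 / p) * (∫⁻ z, g z ^ q ∂μ) ^ (1 / q) :=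
    ENNReal.lintegral_mul_le_Lp_mul_Lq μ hpq hfm.aemeasurable hgm.aemeasurable
  -- Step D : the f-factor
  have stepD : (∫⁻ z, f z ^ p ∂μ) ≤ volume E := by
    have hfp : ∀ z, f z ^ p = f z := by
      intro z
      by_cases hzE : z ∈ E <;> simp [hf_def, hzE, ENNReal.zero_rpow_of_pos hp0]
    simp_rw [hfp, hf_def]
    rw [lintegral_indicator hE, setLIntegral_one, hμ_def, Measure.restrict_apply hE]
    exact measure_mono Set.inter_subset_left
  -- Step E : the g-factor
  have hIOn : IntegrableOn (fun z => z ^ r) (Ioo (0:ℝ) s) := by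
    exact (intervalIntegral.intervalIntegrable_rpow' (a := 0) (b := s) hr).1.mono_set
      Ioo_subset_Ioc_self
  have hIval : (∫ z in Ioo (0:ℝ) s, z ^ r) = s ^ (r + 1) / (r + 1) := by
    rw [← MeasureTheory.integral_Ioc_eq_integral_Ioo,
      ← intervalIntegral.integral_of_le hs.le,
      integral_rpow (Or.inl hr),
      Real.zero_rpow (by linarith), sub_zero]
  have stepE : (∫⁻ z, g z ^ q ∂μ) = ENNReal.ofReal (s ^ (r + 1) / (r + 1)) := by
    have h1 : (∫⁻ z, g z ^ q ∂μ) = ∫⁻ z, ENNReal.ofReal (z ^ r) ∂μ := by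
      refine lintegral_congr_ae ?_
      filter_upwards [haeIoo] with z hz
      have hz0 : (0:ℝ) < z := hz.1
      show ENNReal.ofReal (z ^ ν) ^ q = ENNReal.ofReal (z ^ r)
      rw [ENNReal.ofReal_rpow_of_nonneg (rpow_nonneg hz0.le ν) hq0.le,
        ← Real.rpow_mul hz0.le]
    rw [h1, ← hIval]
    rw [← ofReal_integral_eq_lintegral_ofReal hIOn ?_]
    · filter_upwards [haeIoo] with z hz using rpow_nonneg hz.1.le r
  -- combine the ENNReal estimates
  have hInn : (0:ℝ) ≤ s ^ (r + 1) / (r + 1) := by positivity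
  have bound1 : (∫⁻ z, ENNReal.ofReal (F z) ∂μ)
      ≤ ENNReal.ofReal c *
        ((volume E) ^ (1 / p) * ENNReal.ofReal (s ^ (r + 1) / (r + 1)) ^ (1 / q)) := by
    rw [stepB]
    refine mul_le_mul_right (stepC.trans ?_) _
    rw [stepE]
    exact mul_le_mul_left (ENNReal.rpow_le_rpow stepD (by positivity)) _
  have hfin : ENNReal.ofReal c *
      ((volume E) ^ (1 / p) * ENNReal.ofReal (s ^ (r + 1) / (r + 1)) ^ (1 / q)) ≠ ⊤ := by
    apply ENNReal.mul_ne_top ENNReal.ofReal_ne_top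
    apply ENNReal.mul_ne_top
    · exact ENNReal.rpow_ne_top_of_nonneg (by positivity) hEfin.ne
    · exact ENNReal.rpow_ne_top_of_nonneg (by positivity) ENNReal.ofReal_ne_top
  have toReal_eq : (ENNReal.ofReal c *
      ((volume E) ^ (1 / p) * ENNReal.ofReal (s ^ (r + 1) / (r + 1)) ^ (1 / q))).toReal
      = c * ((volume E).toReal ^ (1 / p) * (s ^ (r + 1) / (r + 1)) ^ (1 / q)) := by
    rw [ENNReal.toReal_mul, ENNReal.toReal_mul, ENNReal.toReal_ofReal hc.le,
      ← ENNReal.toReal_rpow, ← ENNReal.toReal_rpow, ENNReal.toReal_ofReal hInn]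
  have main : (∫ z in Ioo (0:ℝ) s, F z)
      ≤ c * ((volume E).toReal ^ (1 / p) * (s ^ (r + 1) / (r + 1)) ^ (1 / q)) := by
    rw [stepA, ← toReal_eq]
    exact ENNReal.toReal_mono hfin bound1
  -- real algebra for the constant
  have h1q : 1 / q = (p - 1) / p := by
    rw [hq_def]; field_simp
  have hkey : (s ^ (r + 1) / (r + 1)) ^ (1 / q)
      = ((p - 1) / (p * (ν + 1) - 1)) ^ ((p - 1) / p) * s ^ (ν + 1 - 1 / p) := by
    have hinv : (r + 1)⁻¹ = (p - 1) / (p * (ν + 1) - 1) := by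
      rw [hr1, inv_div]
    have e1 : s ^ (r + 1) / (r + 1) = ((p - 1) / (p * (ν + 1) - 1)) * s ^ (r + 1) := by
      rw [div_eq_mul_inv, hinv, mul_comm]
    have e2 : (r + 1) * ((p - 1) / p) = ν + 1 - 1 / p := by
      have h1 : p ≠ 0 := by linarith
      have h2 : p - 1 ≠ 0 := by linarith
      rw [hr1]; field_simp
    rw [e1, Real.mul_rpow (div_nonneg (by linarith) (by linarith)) (by positivity), h1q, ← Real.rpow_mul hs.le, e2]
  calc (∫ z in Ioo (0:ℝ) s, E.indicator (fun _ => (1:ℝ)) z * ((ν + 2) * z ^ ν * s ^ (-(ν + 1))))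
      = ∫ z in Ioo (0:ℝ) s, F z := rfl
    _ ≤ c * ((volume E).toReal ^ (1 / p) * (s ^ (r + 1) / (r + 1)) ^ (1 / q)) := main
    _ = (ν + 2) * ((p - 1) / (p * (ν + 1) - 1)) ^ ((p - 1) / p)
          * (volume E).toReal ^ (1 / p) * s ^ (-1 / p) := by
        rw [hkey, hc_def, show (-1 / p : ℝ) = -(ν + 1) + (ν + 1 - 1 / p) by ring,
          Real.rpow_add hs]
        ring
    _ ≤ _ := by
        have h1 : s ^ (-1 / p) ≤ x ^ (-1 / p) :=
          Real.rpow_le_rpow_of_nonpos hx (by rw [hs_def]; linarith)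
            (by rw [neg_div]; exact neg_nonpos.mpr (by positivity))
        have h2 : (0:ℝ) ≤ y ^ (-1 / p) := rpow_nonneg hy.le _
        have hC : (0:ℝ) ≤ (ν + 2) * ((p - 1) / (p * (ν + 1) - 1)) ^ ((p - 1) / p)
            * (volume E).toReal ^ (1 / p) :=
          mul_nonneg (mul_nonneg (by linarith)
            (rpow_nonneg (div_nonneg (by linarith) (by linarith)) _))
            (rpow_nonneg ENNReal.toReal_nonneg _)
        exact mul_le_mul_of_nonneg_left (by linarith) hC
end

section
/- Let m > 1, σ₂ ∈ (0,1], A, B > 0, and let X : (0,∞) → ℝ be defined by X(t) = (R₁ + R₂ t^{-1})^{(m-1)/σ₂} with R₂ = m/(σ₂ B) and R₁ = (m A / B)^{σ₂/(m+σ₂-1)}. Then X is a supersolution of the differential inequality Y'(t) + B Y(t)^{(m+σ₂-1)/(m-1)} ≤ A, i.e., X'(t) + B X(t)^{(m+σ₂-1)/(m-1)} ≥ A for all t > 0, and X(t) → ∞ as t → 0⁺. -/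
open Real Set

theorem supersolution_superlinear_moment (m σ₂ A B : ℝ) (hm : 1 < m)
    (hσ₂ : 0 < σ₂) (hσ₂' : σ₂ ≤ 1) (hA : 0 < A) (hB : 0 < B) :
    (∀ t > (0:ℝ),
      A ≤ deriv (fun s => ((m * A / B) ^ (σ₂ / (m + σ₂ - 1)) + (m / (σ₂ * B)) * s⁻¹)
              ^ ((m - 1) / σ₂)) t
          + B * (((m * A / B) ^ (σ₂ / (m + σ₂ - 1)) + (m / (σ₂ * B)) * t⁻¹)
              ^ ((m - 1) / σ₂)) ^ ((m + σ₂ - 1) / (m - 1)))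
    ∧ Filter.Tendsto
        (fun t => ((m * A / B) ^ (σ₂ / (m + σ₂ - 1)) + (m / (σ₂ * B)) * t⁻¹)
            ^ ((m - 1) / σ₂))
        (nhdsWithin 0 (Ioi 0)) Filter.atTop := by
  have hm1 : (0:ℝ) < m - 1 := by linarith
  have hms : (0:ℝ) < m + σ₂ - 1 := by linarith
  have hm0 : (0:ℝ) < m := by linarith
  set R₁ : ℝ := (m * A / B) ^ (σ₂ / (m + σ₂ - 1)) with hR₁
  set R₂ : ℝ := m / (σ₂ * B) with hR₂
  have hR₁pos : 0 < R₁ := Real.rpow_pos_of_pos (by positivity) _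
  have hR₂pos : 0 < R₂ := by positivity
  set α : ℝ := (m - 1) / σ₂ with hα
  have hαpos : 0 < α := by positivity
  have hR₁pow : R₁ ^ (α + 1) = m * A / B := by
    rw [hR₁, ← Real.rpow_mul (by positivity), show (σ₂ / (m + σ₂ - 1)) * (α + 1) = 1 by
        rw [hα]; field_simp; ring, Real.rpow_one]
  constructor
  · intro t ht
    have hv : 0 < R₁ + R₂ * t⁻¹ := by positivity
    set v : ℝ := R₁ + R₂ * t⁻¹ with hvdef
    have hD : HasDerivAt (fun s : ℝ => (R₁ + R₂ * s⁻¹) ^ α)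
        ((R₂ * -(t ^ 2)⁻¹) * α * v ^ (α - 1)) t := by
      have h1 : HasDerivAt (fun s : ℝ => R₁ + R₂ * s⁻¹) (R₂ * -(t ^ 2)⁻¹) t := by
        simpa using ((hasDerivAt_inv ht.ne').const_mul R₂).const_add R₁
      exact h1.rpow_const (Or.inl hv.ne')
    rw [hD.deriv]
    have hpow : (v ^ α) ^ ((m + σ₂ - 1) / (m - 1)) = v ^ (α + 1) := by
      rw [← Real.rpow_mul hv.le]
      congr 1
      rw [hα]; field_simp; ring
    rw [hpow]
    set u : ℝ := R₂ * t⁻¹ with hu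
    have hupos : 0 < u := by positivity
    have huv : u ≤ v := by rw [hvdef]; linarith
    have hsplit : v ^ (α + 1) = v ^ (α - 1) * v * v := by
      rw [show α + 1 = (α - 1) + 1 + 1 by ring, Real.rpow_add hv, Real.rpow_add hv,
        Real.rpow_one]
    have hvpow : 0 < v ^ (α - 1) := Real.rpow_pos_of_pos hv _
    have key1 : u ^ 2 * v ^ (α - 1) ≤ v ^ (α + 1) := by
      have hu2 : u ^ 2 ≤ v ^ 2 := by nlinarith
      calc u ^ 2 * v ^ (α - 1) ≤ v ^ 2 * v ^ (α - 1) :=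
            mul_le_mul_of_nonneg_right hu2 hvpow.le
        _ = v ^ (α - 1) * v * v := by ring
        _ = v ^ (α + 1) := hsplit.symm
    have hceq : R₂ * (t ^ 2)⁻¹ * α = (m - 1) * B / m * (u ^ 2) := by
      rw [hu, hR₂, hα]
      field_simp
    have hmono : R₁ ^ (α + 1) ≤ v ^ (α + 1) :=
      Real.rpow_le_rpow hR₁pos.le (by rw [hvdef]; nlinarith) (by linarith)
    have hfinal : A ≤ - ((m - 1) * B / m * (u ^ 2) * v ^ (α - 1)) + B * v ^ (α + 1) := by
      have hc : 0 < (m - 1) * B / m := by positivity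
      have h1 : (m - 1) * B / m * (u ^ 2 * v ^ (α - 1)) ≤ (m - 1) * B / m * v ^ (α + 1) :=
        mul_le_mul_of_nonneg_left key1 hc.le
      have h2 : B / m * R₁ ^ (α + 1) ≤ B / m * v ^ (α + 1) :=
        mul_le_mul_of_nonneg_left hmono (by positivity)
      have h3 : B / m * R₁ ^ (α + 1) = A := by
        rw [hR₁pow]; field_simp
      have h1' : (m - 1) * B / m * u ^ 2 * v ^ (α - 1) ≤ (m - 1) * B / m * v ^ (α + 1) := by
        calc (m - 1) * B / m * u ^ 2 * v ^ (α - 1)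
            = (m - 1) * B / m * (u ^ 2 * v ^ (α - 1)) := by ring
          _ ≤ (m - 1) * B / m * v ^ (α + 1) := h1
      have h4 : (m - 1) * B / m * v ^ (α + 1) + B / m * v ^ (α + 1) = B * v ^ (α + 1) := by
        field_simp; ring
      linarith
    calc A ≤ - ((m - 1) * B / m * (u ^ 2) * v ^ (α - 1)) + B * v ^ (α + 1) := hfinal
    _ = R₂ * -(t ^ 2)⁻¹ * α * v ^ (α - 1) + B * v ^ (α + 1) := by
        rw [show R₂ * -(t ^ 2)⁻¹ * α = -(R₂ * (t ^ 2)⁻¹ * α) by ring, hceq]; ring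
  · have h1 : Filter.Tendsto (fun t : ℝ => R₁ + R₂ * t⁻¹) (nhdsWithin 0 (Ioi 0))
        Filter.atTop := by
      apply Filter.tendsto_atTop_add_const_left
      exact Filter.Tendsto.const_mul_atTop hR₂pos tendsto_inv_nhdsGT_zero
    exact (tendsto_rpow_atTop hαpos).comp h1
end

section
/- Let ψ be a convex C² function on [0,∞) with ψ(0) = ψ'(0) = 0 and ψ' positive and concave, satisfying (x+y)(ψ(x+y) - ψ(x) - ψ(y)) ≤ 2(x ψ(y) + y ψ(x)) for all x,y > 0. Then for 0 ≤ σ₁ ≤ σ₂ ≤ 1 and all x,y > 0, (ψ(x+y) - ψ(x) - ψ(y)) x^{σ₁} y^{σ₂} ≤ 2( x^{1+σ₁}(x+y)^{σ₂-1} ψ(y) + y^{1+σ₂}(x+y)^{σ₁-1} ψ(x) ) ≤ 2( x^{σ₁+σ₂} ψ(y) + y^{σ₁+σ₂} ψ(x) ). -/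
open Real Set

/-! ψ is nonnegative on `[0, ∞)`, since it increases from `ψ 0 = 0`. Multiplying the key inequality
by `x ^ σ₁ * y ^ σ₂ / (x + y)` and using `y ^ σ₂ ≤ (x + y) ^ σ₂`, `x ^ σ₁ ≤ (x + y) ^ σ₁` gives the
first bound; the second follows from `(x + y) ^ (σ - 1) ≤ x ^ (σ - 1)` for `σ ≤ 1`. -/

lemma nonneg_of_continuousOn_Ici_of_deriv_pos {ψ : ℝ → ℝ} (hcont : ContinuousOn ψ (Ici 0))
    (h0 : ψ 0 = 0) (hderiv : ∀ x > (0:ℝ), 0 < deriv ψ x) {x : ℝ} (hx : 0 ≤ x) : 0 ≤ ψ x := by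
  have hmono : StrictMonoOn ψ (Ici 0) :=
    strictMonoOn_of_deriv_pos (convex_Ici 0) hcont fun t ht ↦ hderiv t (by simpa using ht)
  simpa [h0] using hmono.monotoneOn (mem_Ici.mpr le_rfl) (mem_Ici.mpr hx) hx

lemma rpow_div_le_rpow_sub_one {a c s : ℝ} (ha : 0 ≤ a) (hac : a ≤ c) (hc : 0 < c)
    (hs : 0 ≤ s) : a ^ s / c ≤ c ^ (s - 1) := by
  rw [rpow_sub_one hc.ne']
  exact div_le_div_of_nonneg_right (rpow_le_rpow ha hac hs) hc.le

lemma rpow_one_add_mul_rpow_sub_one_le {a c r t : ℝ} (ha : 0 < a) (hac : a ≤ c) (ht : t ≤ 1) :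
    a ^ (1 + r) * c ^ (t - 1) ≤ a ^ (r + t) :=
  calc a ^ (1 + r) * c ^ (t - 1) ≤ a ^ (1 + r) * a ^ (t - 1) := by
        gcongr a ^ (1 + r) * ?_
        exact rpow_le_rpow_of_nonpos ha hac (by linarith)
    _ = a ^ (r + t) := by rw [← rpow_add ha]; ring_nf

section

variable {x y σ₁ σ₂ A B : ℝ}

lemma weighted_le_of_mul_add_le (hx : 0 < x) (hy : 0 < y) (h1 : 0 ≤ σ₁) (h2 : 0 ≤ σ₂)
    (hA : 0 ≤ A) (hB : 0 ≤ B) {D : ℝ} (hD : (x + y) * D ≤ 2 * (x * B + y * A)) :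
    D * x ^ σ₁ * y ^ σ₂
      ≤ 2 * (x ^ (1 + σ₁) * (x + y) ^ (σ₂ - 1) * B + y ^ (1 + σ₂) * (x + y) ^ (σ₁ - 1) * A) := by
  have hs : 0 < x + y := by linarith
  have hxσ : 0 ≤ x ^ σ₁ := rpow_nonneg hx.le _
  have hyσ : 0 ≤ y ^ σ₂ := rpow_nonneg hy.le _
  have hyS : y ^ σ₂ / (x + y) ≤ (x + y) ^ (σ₂ - 1) :=
    rpow_div_le_rpow_sub_one hy.le (by linarith) hs h2
  have hxS : x ^ σ₁ / (x + y) ≤ (x + y) ^ (σ₁ - 1) :=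
    rpow_div_le_rpow_sub_one hx.le (by linarith) hs h1
  calc D * x ^ σ₁ * y ^ σ₂ = (x + y) * D * (x ^ σ₁ * y ^ σ₂) / (x + y) := by
        field_simp
    _ ≤ 2 * (x * B + y * A) * (x ^ σ₁ * y ^ σ₂) / (x + y) := by gcongr
    _ = 2 * (x ^ (1 + σ₁) * (y ^ σ₂ / (x + y)) * B + y ^ (1 + σ₂) * (x ^ σ₁ / (x + y)) * A) := by
        rw [rpow_add hx, rpow_add hy, rpow_one, rpow_one]; ring
    _ ≤ _ := by gcongr

lemma weighted_le_rpow_add (hx : 0 < x) (hy : 0 < y) (h1 : σ₁ ≤ 1) (h2 : σ₂ ≤ 1)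
    (hA : 0 ≤ A) (hB : 0 ≤ B) :
    2 * (x ^ (1 + σ₁) * (x + y) ^ (σ₂ - 1) * B + y ^ (1 + σ₂) * (x + y) ^ (σ₁ - 1) * A)
      ≤ 2 * (x ^ (σ₁ + σ₂) * B + y ^ (σ₁ + σ₂) * A) := by
  have hxS : x ^ (1 + σ₁) * (x + y) ^ (σ₂ - 1) ≤ x ^ (σ₁ + σ₂) :=
    rpow_one_add_mul_rpow_sub_one_le hx (by linarith) h2
  have hyS : y ^ (1 + σ₂) * (x + y) ^ (σ₁ - 1) ≤ y ^ (σ₁ + σ₂) := by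
    rw [add_comm σ₁]
    exact rpow_one_add_mul_rpow_sub_one_le hy (by linarith) h1
  gcongr

end

theorem convex_function_collision_estimate_general (ψ : ℝ → ℝ)
    (hC2 : ContDiffOn ℝ 2 ψ (Ici 0)) (hψ0 : ψ 0 = 0)
    (hψ'pos : ∀ x > (0:ℝ), 0 < deriv ψ x)
    (hkey : ∀ x > (0:ℝ), ∀ y > (0:ℝ),
      (x + y) * (ψ (x + y) - ψ x - ψ y) ≤ 2 * (x * ψ y + y * ψ x))
    (σ₁ σ₂ : ℝ) (h1 : 0 ≤ σ₁) (h2 : σ₁ ≤ σ₂) (h3 : σ₂ ≤ 1)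
    (x y : ℝ) (hx : 0 < x) (hy : 0 < y) :
    (ψ (x + y) - ψ x - ψ y) * x ^ σ₁ * y ^ σ₂
      ≤ 2 * (x ^ (1 + σ₁) * (x + y) ^ (σ₂ - 1) * ψ y + y ^ (1 + σ₂) * (x + y) ^ (σ₁ - 1) * ψ x)
    ∧ 2 * (x ^ (1 + σ₁) * (x + y) ^ (σ₂ - 1) * ψ y + y ^ (1 + σ₂) * (x + y) ^ (σ₁ - 1) * ψ x)
      ≤ 2 * (x ^ (σ₁ + σ₂) * ψ y + y ^ (σ₁ + σ₂) * ψ x) := by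
  have hψx := nonneg_of_continuousOn_Ici_of_deriv_pos hC2.continuousOn hψ0 hψ'pos hx.le
  have hψy := nonneg_of_continuousOn_Ici_of_deriv_pos hC2.continuousOn hψ0 hψ'pos hy.le
  exact ⟨weighted_le_of_mul_add_le hx hy h1 (h1.trans h2) hψx hψy (hkey x hx y hy),
    weighted_le_rpow_add hx hy (h2.trans h3) h3 hψx hψy⟩

theorem convex_function_collision_estimate (ψ : ℝ → ℝ) (hconv : ConvexOn ℝ (Ici 0) ψ)
    (hC2 : ContDiffOn ℝ 2 ψ (Ici 0)) (hψ0 : ψ 0 = 0) (hψ'0 : deriv ψ 0 = 0)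
    (hψ'pos : ∀ x > (0:ℝ), 0 < deriv ψ x) (hψ'conc : ConcaveOn ℝ (Ici 0) (deriv ψ))
    (hkey : ∀ x > (0:ℝ), ∀ y > (0:ℝ),
      (x + y) * (ψ (x + y) - ψ x - ψ y) ≤ 2 * (x * ψ y + y * ψ x))
    (σ₁ σ₂ : ℝ) (h1 : 0 ≤ σ₁) (h2 : σ₁ ≤ σ₂) (h3 : σ₂ ≤ 1)
    (x y : ℝ) (hx : 0 < x) (hy : 0 < y) :
    (ψ (x + y) - ψ x - ψ y) * x ^ σ₁ * y ^ σ₂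
      ≤ 2 * (x ^ (1 + σ₁) * (x + y) ^ (σ₂ - 1) * ψ y + y ^ (1 + σ₂) * (x + y) ^ (σ₁ - 1) * ψ x)
    ∧ 2 * (x ^ (1 + σ₁) * (x + y) ^ (σ₂ - 1) * ψ y + y ^ (1 + σ₂) * (x + y) ^ (σ₁ - 1) * ψ x)
      ≤ 2 * (x ^ (σ₁ + σ₂) * ψ y + y ^ (σ₁ + σ₂) * ψ x) :=
  convex_function_collision_estimate_general ψ hC2 hψ0 hψ'pos hkey σ₁ σ₂ h1 h2 h3 x y hx hy
end
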